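/- arXiv:1703.04225 — 5 statements merged into one kernel-verified Lean document; each statement's English description precedes it below -/
import Mathlib

section
/- If in the Gale-Shapley deferred acceptance algorithm all items share the same strict preference order over agents, say agent 1 > agent 2 > ... > agent n, then the resulting stable matching is identical to the output of Serial Dictatorship in which agents choose in the order 1, 2, ..., n, each taking its most preferred item not already taken. -/
/-- `f` is the matching produced by Serial Dictatorship on the strict preference
profile given by ranks `r` (lower rank = more preferred), with agents choosing in
the order `0, 1, …, n-1`: each agent takes its most preferred item not already
taken by an earlier agent. -/
def IsSD {n : ℕ} (r : Fin n → Fin n → ℕ) (f : Fin n → Fin n) : Prop :=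
  Function.Bijective f ∧
    ∀ i o : Fin n, (∀ j : Fin n, j < i → f j ≠ o) → r i (f i) ≤ r i o


/-- State of the agent-proposing Gale-Shapley (deferred acceptance) algorithm:
the list of agents still to propose, for each agent the set of items that have
rejected it, and for each item the agent it currently (tentatively) holds. -/
structure GSState (n : ℕ) where
  queue : List (Fin n)
  rejected : Fin n → Finset (Fin n)
  holder : Fin n → Option (Fin n)

/-- The most preferred element of `S` according to the rank function `ra`
(lower rank = more preferred). -/
def bestIn {n : ℕ} (ra : Fin n → ℕ) (S : Finset (Fin n)) : Option (Fin n) :=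
  (List.finRange n).find? fun o => decide (o ∈ S ∧ ∀ o' ∈ S, ra o ≤ ra o')

/-- One step of agent-proposing deferred acceptance: the next unmatched agent `a`
proposes to its most preferred item `o` among those that have not rejected it; the
item accepts if unmatched, or if it strictly prefers `a` to its current holder `b`
(in which case `b` is rejected and will propose again); otherwise `a` is rejected. -/
def gsStep {n : ℕ} (rA rI : Fin n → Fin n → ℕ) (s : GSState n) : GSState n :=
  match s.queue with
  | [] => s
  | a :: rest =>
      match bestIn (rA a) (Finset.univ \ s.rejected a) with
      | none => { s with queue := rest }
      | some o =>
          match s.holder o with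
          | none => { s with queue := rest,
                             holder := Function.update s.holder o (some a) }
          | some b =>
              if rI o a < rI o b then
                { queue := rest ++ [b],
                  rejected := Function.update s.rejected b (insert o (s.rejected b)),
                  holder := Function.update s.holder o (some a) }
              else
                { s with queue := rest ++ [a],
                         rejected := Function.update s.rejected a
                            (insert o (s.rejected a)) }

/-- The final state of the Gale-Shapley algorithm on agent ranks `rA` and item ranks
`rI` (enough steps are taken for the algorithm to terminate). -/
def gsRun {n : ℕ} (rA rI : Fin n → Fin n → ℕ) : GSState n :=
  (gsStep rA rI)^[n * n + n]
    { queue := List.finRange n, rejected := fun _ => ∅, holder := fun _ => none }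

/-! With the common priority `0 > 1 > ⋯ > n-1`, deferred acceptance keeps two facts true:
every agent that holds an item holds its favourite among the items that have not rejected it,
and an item that has rejected agent `x` is held by an agent of higher priority than `x`.
When the queue is empty everybody holds an item, and by induction along the priority order
agent `a` holds `f a`: the items that rejected `a` are held by earlier agents, hence (by the
induction hypothesis) are among the items taken before `a` in serial dictatorship, so `a`'s
favourite among the remaining items is both what it holds and what the dictatorship gives it.
The queue length plus the number of rejections still possible is a potential that decreases
at every step, so `n * n + n` steps suffice. -/

open Finset

lemma sum_card_update_insert {ι α : Type*} [Fintype ι] [DecidableEq ι] [DecidableEq α]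
    (r : ι → Finset α) {c : ι} {o : α} (h : o ∉ r c) :
    ∑ x, (Function.update r c (insert o (r c)) x).card = ∑ x, (r x).card + 1 := by
  rw [← add_sum_erase _ _ (mem_univ c), ← add_sum_erase _ _ (mem_univ c),
    Function.update_self, card_insert_of_notMem h,
    sum_congr rfl fun x hx => by rw [Function.update_of_ne (ne_of_mem_erase hx)]]
  ring

lemma sum_card_le_card_mul_card {ι α : Type*} [Fintype ι] [Fintype α] (r : ι → Finset α) :
    ∑ x, (r x).card ≤ Fintype.card ι * Fintype.card α := by
  simpa using sum_le_sum fun x (_ : x ∈ univ) => card_le_univ (r x)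

section GaleShapley

variable {n : ℕ} {rA rI : Fin n → Fin n → ℕ} {s : GSState n} {a o b : Fin n}
  {rest : List (Fin n)}

lemma bestIn_spec {ra : Fin n → ℕ} {S : Finset (Fin n)} (h : bestIn ra S = some o) :
    o ∈ S ∧ ∀ o' ∈ S, ra o ≤ ra o' := by
  simpa using List.find?_some h

lemma bestIn_ne_none {ra : Fin n → ℕ} {S : Finset (Fin n)} (hS : S.Nonempty) :
    bestIn ra S ≠ none := by
  obtain ⟨o, ho, hmin⟩ := S.exists_min_image ra hS
  simpa [bestIn, List.find?_eq_none] using ⟨o, ho, hmin⟩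

lemma gsStep_of_queue_eq_nil (hq : s.queue = []) : gsStep rA rI s = s := by
  simp only [gsStep, hq]

lemma gsStep_of_free (hq : s.queue = a :: rest)
    (hb : bestIn (rA a) (univ \ s.rejected a) = some o) (hh : s.holder o = none) :
    gsStep rA rI s = { s with queue := rest, holder := Function.update s.holder o (some a) } := by
  simp only [gsStep, hq, hb, hh]

lemma gsStep_of_accept (hq : s.queue = a :: rest)
    (hb : bestIn (rA a) (univ \ s.rejected a) = some o)
    (hh : s.holder o = some b) (hab : rI o a < rI o b) :
    gsStep rA rI s =
      { queue := rest ++ [b]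
        rejected := Function.update s.rejected b (insert o (s.rejected b))
        holder := Function.update s.holder o (some a) } := by
  simp only [gsStep, hq, hb, hh, if_pos hab]

lemma gsStep_of_reject (hq : s.queue = a :: rest)
    (hb : bestIn (rA a) (univ \ s.rejected a) = some o)
    (hh : s.holder o = some b) (hab : ¬ rI o a < rI o b) :
    gsStep rA rI s =
      { s with
        queue := rest ++ [a]
        rejected := Function.update s.rejected a (insert o (s.rejected a)) } := by
  simp only [gsStep, hq, hb, hh, if_neg hab]

structure GSInv (rA : Fin n → Fin n → ℕ) (s : GSState n) : Prop where
  nodup : s.queue.Nodup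
  mem_queue_iff : ∀ a, a ∈ s.queue ↔ ∀ o, s.holder o ≠ some a
  holder_best : ∀ o b, s.holder o = some b →
    o ∉ s.rejected b ∧ ∀ o', o' ∉ s.rejected b → rA b o ≤ rA b o'
  rejected_held_by_lt : ∀ x o, o ∈ s.rejected x → ∃ b < x, s.holder o = some b

lemma gsInv_init (rA : Fin n → Fin n → ℕ) :
    GSInv rA { queue := List.finRange n, rejected := fun _ => ∅, holder := fun _ => none } where
  nodup := List.nodup_finRange n
  mem_queue_iff a := by simp
  holder_best := by simp
  rejected_held_by_lt := by simp

namespace GSInv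

lemma holder_inj (hA : ∀ a, Function.Injective (rA a)) (hs : GSInv rA s) {o o' b : Fin n}
    (h : s.holder o = some b) (h' : s.holder o' = some b) : o = o' := by
  obtain ⟨hr, hle⟩ := hs.holder_best o b h
  obtain ⟨hr', hle'⟩ := hs.holder_best o' b h'
  exact hA b (le_antisymm (hle o' hr') (hle' o hr))

lemma rank_le_of_not_held_by_lt (hs : GSInv rA s) (ha : s.holder o = some a) {o' : Fin n}
    (ho' : ∀ b < a, s.holder o' ≠ some b) : rA a o ≤ rA a o' := by
  refine (hs.holder_best o a ha).2 o' fun hrej => ?_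
  obtain ⟨b, hb, hbo'⟩ := hs.rejected_held_by_lt a o' hrej
  exact ho' b hb hbo'

/-- Otherwise the `n` items would be held injectively by agents other than `a`. -/
lemma exists_not_rejected (hA : ∀ a, Function.Injective (rA a)) (hs : GSInv rA s)
    (a : Fin n) : ∃ o, o ∉ s.rejected a := by
  by_contra! hall
  choose g hga hg using fun o => hs.rejected_held_by_lt a o (hall o)
  have hinj : Function.Injective g := fun o o' h => hs.holder_inj hA (hg o) (h ▸ hg o')
  obtain ⟨o, rfl⟩ := Finite.surjective_of_injective hinj a
  exact lt_irrefl _ (hga o)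

lemma propose_free (hs : GSInv rA s) (hq : s.queue = a :: rest) (ho : o ∉ s.rejected a)
    (hbest : ∀ o', o' ∉ s.rejected a → rA a o ≤ rA a o') (hh : s.holder o = none) :
    GSInv rA { s with queue := rest, holder := Function.update s.holder o (some a) } := by
  obtain ⟨hnd, hmem, hheld, hrej⟩ := hs
  rw [hq] at hnd hmem
  refine ⟨hnd.of_cons, fun x => ?_, fun o' b => ?_, fun x o' => ?_⟩ <;>
    simp only [Function.update_apply] <;> grind

/-- The displaced agent `b` held only `o`, so it becomes free; every agent rejected at `o`
so far had lower priority than `b`, hence than the new holder `a`. -/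
lemma propose_accept (hA : ∀ a, Function.Injective (rA a)) (hs : GSInv rA s)
    (hq : s.queue = a :: rest) (ho : o ∉ s.rejected a)
    (hbest : ∀ o', o' ∉ s.rejected a → rA a o ≤ rA a o') (hh : s.holder o = some b)
    (hab : a < b) :
    GSInv rA
      { queue := rest ++ [b]
        rejected := Function.update s.rejected b (insert o (s.rejected b))
        holder := Function.update s.holder o (some a) } := by
  have hinj : ∀ o o' b, s.holder o = some b → s.holder o' = some b → o = o' :=
    fun _ _ _ => hs.holder_inj hA
  obtain ⟨hnd, hmem, hheld, hrej⟩ := hs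
  rw [hq] at hnd hmem
  refine ⟨?_, fun x => ?_, fun o' b => ?_, fun x o' => ?_⟩ <;>
    simp only [Function.update_apply] <;> grind

lemma propose_reject (hs : GSInv rA s) (hq : s.queue = a :: rest)
    (hh : s.holder o = some b) (hba : b < a) :
    GSInv rA
      { s with
        queue := rest ++ [a]
        rejected := Function.update s.rejected a (insert o (s.rejected a)) } := by
  obtain ⟨hnd, hmem, hheld, hrej⟩ := hs
  rw [hq] at hnd hmem
  refine ⟨?_, fun x => ?_, fun o' b => ?_, fun x o' => ?_⟩ <;>
    simp only [Function.update_apply] <;> grind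

end GSInv

def potential (s : GSState n) : ℕ :=
  s.queue.length + (n * n - ∑ x, (s.rejected x).card)

lemma potential_lt_of_rejected_eq_update {s s' : GSState n} {c : Fin n}
    (hlen : s'.queue.length = s.queue.length) (hc : o ∉ s.rejected c)
    (hrej : s'.rejected = Function.update s.rejected c (insert o (s.rejected c))) :
    potential s' < potential s := by
  have hsum := sum_card_update_insert s.rejected hc
  have hle := sum_card_le_card_mul_card s'.rejected
  rw [hrej, Fintype.card_fin] at hle
  simp only [potential, hlen, hrej]
  omega

lemma GSInv.gsStep_and_potential_lt (hA : ∀ a, Function.Injective (rA a)) (hs : GSInv rA s)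
    (hq : s.queue = a :: rest) :
    GSInv rA (gsStep rA (fun _ x => x) s) ∧
      potential (gsStep rA (fun _ x => x) s) < potential s := by
  obtain ⟨o₀, ho₀⟩ := hs.exists_not_rejected hA a
  obtain ⟨o, hb⟩ := Option.ne_none_iff_exists'.1 <|
    bestIn_ne_none (ra := rA a) ⟨o₀, mem_sdiff.2 ⟨mem_univ o₀, ho₀⟩⟩
  obtain ⟨hor, hbest⟩ := bestIn_spec hb
  simp only [mem_sdiff, mem_univ, true_and] at hor hbest
  rcases hh : s.holder o with _ | b
  · rw [gsStep_of_free hq hb hh]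
    exact ⟨hs.propose_free hq hor hbest hh, by simp [potential, hq]⟩
  have hba : b ≠ a := fun e => (hs.mem_queue_iff a).1 (by simp [hq]) o (e ▸ hh)
  rcases lt_or_gt_of_ne hba with hba | hab
  · rw [gsStep_of_reject hq hb hh (not_lt.2 hba.le)]
    exact ⟨hs.propose_reject hq hh hba,
      potential_lt_of_rejected_eq_update (by simp [hq]) hor rfl⟩
  · rw [gsStep_of_accept hq hb hh hab]
    exact ⟨hs.propose_accept hA hq hor hbest hh hab,
      potential_lt_of_rejected_eq_update (by simp [hq]) (hs.holder_best o b hh).1 rfl⟩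

lemma GSInv.iterate_gsStep (hA : ∀ a, Function.Injective (rA a)) (k : ℕ) (hs : GSInv rA s)
    (hk : potential s ≤ k) :
    GSInv rA ((gsStep rA fun _ x => x)^[k] s) ∧ ((gsStep rA fun _ x => x)^[k] s).queue = [] := by
  induction k generalizing s with
  | zero =>
    simp only [potential, nonpos_iff_eq_zero, Nat.add_eq_zero_iff, List.length_eq_zero_iff] at hk
    exact ⟨hs, hk.1⟩
  | succ k ih =>
    rcases hq : s.queue with _ | ⟨a, rest⟩
    · rw [Function.iterate_fixed (gsStep_of_queue_eq_nil hq)]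
      exact ⟨hs, hq⟩
    · obtain ⟨hs', hlt⟩ := hs.gsStep_and_potential_lt hA hq
      exact ih hs' (by omega)

lemma gsInv_gsRun_and_queue_eq_nil (hA : ∀ a, Function.Injective (rA a)) :
    GSInv rA (gsRun rA fun _ x => x) ∧ (gsRun rA fun _ x => x).queue = [] :=
  (gsInv_init rA).iterate_gsStep hA _ (by simp [potential, add_comm])

lemma GSInv.holder_eq_of_isSD (hA : ∀ a, Function.Injective (rA a)) (hs : GSInv rA s)
    (hq : s.queue = []) {f : Fin n → Fin n} (hf : IsSD rA f) (a : Fin n) :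
    s.holder (f a) = some a := by
  induction a using WellFoundedLT.induction with
  | _ a ih =>
  obtain ⟨o, ho⟩ : ∃ o, s.holder o = some a := by
    simpa [hq] using (hs.mem_queue_iff a).not
  have hfa_free : ∀ b < a, s.holder (f a) ≠ some b := fun b hb h =>
    hb.ne (hf.1.1 (hs.holder_inj hA h (ih b hb))).symm
  have ho_free : ∀ j < a, f j ≠ o := fun j hj h =>
    hj.ne (Option.some.inj ((ih j hj).symm.trans (h ▸ ho)))
  have : o = f a :=
    hA a (le_antisymm (hs.rank_le_of_not_held_by_lt ho hfa_free) (hf.2 a o ho_free))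
  exact this ▸ ho

end GaleShapley

/-- If in the Gale-Shapley deferred acceptance algorithm all items share the same
strict preference order over agents, namely agent `0 > 1 > ⋯ > n-1` (item ranks
`fun _ a => a`), then the resulting stable matching is identical to the output of
Serial Dictatorship with agents choosing in the order `0, 1, …, n-1`. -/
theorem galeShapley_common_priority_eq_serialDictatorship {n : ℕ}
    (rA : Fin n → Fin n → ℕ) (hA : ∀ a, Function.Injective (rA a))
    (f : Fin n → Fin n) (hf : IsSD rA f) :
    ∀ a : Fin n, (gsRun rA (fun _ a => (a : ℕ))).holder (f a) = some a := by
  obtain ⟨hinv, hdone⟩ := gsInv_gsRun_and_queue_eq_nil hA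
  exact hinv.holder_eq_of_isSD hA hdone hf
end

section
/- In any outcome of Serial Dictatorship run on strict preferences, the resulting matching is Pareto efficient: there is no other matching that gives every agent an item at least as preferred and some agent a strictly more preferred item. -/
/-- Serial Dictatorship is Pareto efficient: no other matching gives every agent a
weakly preferred item and some agent a strictly preferred item. -/
theorem serialDictatorship_pareto_efficient {n : ℕ}
    (r : Fin n → Fin n → ℕ) (hr : ∀ a, Function.Injective (r a))
    (f : Fin n → Fin n) (hf : IsSD r f) :
    ¬ ∃ g : Fin n → Fin n, Function.Bijective g ∧
        (∀ a, r a (g a) ≤ r a (f a)) ∧ (∃ a, r a (g a) < r a (f a)) := by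
  rintro ⟨g, hg, hweak, a, hstrict⟩
  have key0 : ∀ m : ℕ, ∀ i : Fin n, (i : ℕ) = m → g i = f i := by
    intro m
    induction m using Nat.strong_induction_on with
    | _ m ih =>
      intro i him
      have hfree : ∀ j : Fin n, j < i → f j ≠ g i := by
        intro j hj hfj
        have hji : (j : ℕ) < m := him ▸ hj
        have : g j = g i := by rw [ih j hji j rfl, hfj]
        exact absurd (hg.1 this) (ne_of_lt hj)
      have h1 := (hf.2 i (g i) hfree)
      exact hr i (le_antisymm (hweak i) h1)
  have key : ∀ i : Fin n, g i = f i := fun i => key0 i i rfl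
  exact absurd (key a ▸ hstrict) (lt_irrefl _)
end

section
/- Serial Dictatorship is strategyproof: for any agent i, any profile of strict preferences of the other agents, and any misreport by agent i, the item agent i receives when reporting truthfully is weakly preferred (under i's true preferences) to the item received under the misreport. -/
/-- Serial Dictatorship is strategyproof: if agent `i` unilaterally misreports
(profile `r'` agrees with the true profile `r` for all other agents), then the item
`i` receives under truthful reporting is weakly preferred, according to `i`'s true
preferences, to the item received under the misreport. -/
theorem serialDictatorship_strategyproof {n : ℕ}
    (r r' : Fin n → Fin n → ℕ)
    (hr : ∀ a, Function.Injective (r a)) (hr' : ∀ a, Function.Injective (r' a))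
    (i : Fin n) (hother : ∀ j, j ≠ i → r' j = r j)
    (f g : Fin n → Fin n) (hf : IsSD r f) (hg : IsSD r' g) :
    r i (f i) ≤ r i (g i) := by
  have key : ∀ m : ℕ, ∀ j : Fin n, j.val = m → j < i → f j = g j := by
    intro m
    induction m using Nat.strong_induction_on with
    | _ m ih =>
      intro j hj hji
      have IH : ∀ k : Fin n, k < j → f k = g k := fun k hk =>
        ih k.val (hj ▸ hk) k rfl (lt_trans hk hji)
      have h1 : r j (f j) ≤ r j (g j) := by
        refine hf.2 j (g j) (fun k hk hc => ?_)
        rw [IH k hk] at hc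
        exact absurd (hg.1.1 hc) (ne_of_lt hk)
      have h2 : r' j (g j) ≤ r' j (f j) := by
        refine hg.2 j (f j) (fun k hk hc => ?_)
        rw [← IH k hk] at hc
        exact absurd (hf.1.1 hc) (ne_of_lt hk)
      rw [hother j (ne_of_lt hji)] at h2
      exact hr j (le_antisymm h1 h2)
  refine hf.2 i (g i) (fun j hj hc => ?_)
  rw [key j.val j rfl hj] at hc
  exact absurd (hg.1.1 hc) (ne_of_lt hj)
end

section
/- The matching produced by the Top Trading Cycles algorithm is Pareto efficient: no other matching makes some agent strictly better off without making another agent strictly worse off. -/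
/-- `f` is a matching produced by the Top Trading Cycles algorithm from the initial
endowment `e` and strict preferences given by ranks `r` (lower = more preferred).
The function `t` records the round in which each agent trades (and is removed):
items traded in a round are exactly the endowments of the agents trading in that
round, and each agent receives its most preferred item among the items still
present in its round (the endowments of agents removed no earlier). -/
def IsTTC {n : ℕ} (r : Fin n → Fin n → ℕ) (e : Fin n → Fin n)
    (f : Fin n → Fin n) : Prop :=
  Function.Bijective f ∧
    ∃ t : Fin n → ℕ,
      (∀ a b : Fin n, f a = e b → t b = t a) ∧
      (∀ a b : Fin n, t a ≤ t b → r a (f a) ≤ r a (e b))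

/-- Top Trading Cycles is Pareto efficient: no other matching makes some agent
strictly better off without making another agent strictly worse off. -/
theorem ttc_pareto_efficient {n : ℕ}
    (r : Fin n → Fin n → ℕ) (hr : ∀ a, Function.Injective (r a))
    (e : Fin n → Fin n) (he : Function.Bijective e)
    (f : Fin n → Fin n) (hf : IsTTC r e f) :
    ¬ ∃ g : Fin n → Fin n, Function.Bijective g ∧
        (∀ a, r a (g a) ≤ r a (f a)) ∧ (∃ a, r a (g a) < r a (f a)) := by
  rintro ⟨g, hg, hle, a0, ha0⟩
  obtain ⟨hfbij, t, ht1, ht2⟩ := hf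
  -- set of agents where g differs from f
  set S : Finset (Fin n) := Finset.univ.filter (fun a => g a ≠ f a) with hS
  have hS0 : a0 ∈ S := by
    simp only [hS, Finset.mem_filter, Finset.mem_univ, true_and]
    intro h; rw [h] at ha0; exact lt_irrefl _ ha0
  obtain ⟨a, haS, hamin⟩ := S.exists_min_image t ⟨a0, hS0⟩
  have hane : g a ≠ f a := by
    simpa [hS] using haS
  have hlt : r a (g a) < r a (f a) :=
    lt_of_le_of_ne (hle a) (fun h => hane (hr a h))
  -- g a = e b for some b
  obtain ⟨b, hb⟩ := he.surjective (g a)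
  -- t b < t a, else contradiction with TTC optimality
  have htb : t b < t a := by
    by_contra h
    push_neg at h
    have := ht2 a b h
    rw [hb] at this
    exact absurd this (not_le_of_gt hlt)
  -- c with f c = e b
  obtain ⟨c, hc⟩ := hfbij.surjective (e b)
  have htc : t b = t c := ht1 c b hc
  have hcS : c ∉ S := by
    intro hcS
    exact absurd (hamin c hcS) (not_le_of_gt (htc ▸ htb))
  have hgc : g c = f c := by
    by_contra h
    exact hcS (by simp [hS, h])
  have : c = a := hg.injective (by rw [hgc, hc, hb])
  rw [this] at htc
  exact absurd htb (by rw [htc]; exact lt_irrefl _)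
end

section
/- In the agent-proposing Gale-Shapley algorithm, the output matching is stable: there is no agent-item pair (a, o), with a not matched to o, such that a strictly prefers o to a's assigned item and o strictly prefers a to o's assigned agent. -/
/-! Deferred acceptance preserves an invariant: every agent holding an item holds its favourite
among the items that have not rejected it, and an item that has rejected an agent holds someone it
prefers to that agent (an item's holder only improves). So if `a` prefers `o` to its own item, `o`
has rejected `a` and holds an agent it prefers to `a`. Termination plays no role: every reachable
state is stable in this sense. The remaining fields of the invariant (the queue has no repetitions
and is disjoint from the holders, each agent holds at most one item) are what makes these two
facts inductive. -/

open Function Finset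

lemma bestIn_eq_some {n : ℕ} {ra : Fin n → ℕ} {S : Finset (Fin n)} {o : Fin n}
    (h : bestIn ra S = some o) : o ∈ S ∧ ∀ o' ∈ S, ra o ≤ ra o' := by
  simpa using List.find?_some h

structure GSState.Invariant {n : ℕ} (rA rI : Fin n → Fin n → ℕ) (s : GSState n) : Prop where
  nodup : s.queue.Nodup
  not_mem_queue : ∀ {o a}, s.holder o = some a → a ∉ s.queue
  holder_inj : ∀ {o o' a}, s.holder o = some a → s.holder o' = some a → o = o'
  holder_best : ∀ {o a}, s.holder o = some a → bestIn (rA a) (univ \ s.rejected a) = some o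
  rejected_better : ∀ {a o}, o ∈ s.rejected a → ∃ c, s.holder o = some c ∧ rI o c < rI o a

namespace GSState.Invariant

variable {n : ℕ} {rA rI : Fin n → Fin n → ℕ} {s : GSState n} {a b o : Fin n}
  {rest : List (Fin n)}

lemma skip (h : s.Invariant rA rI) (hq : s.queue = a :: rest) :
    ({ s with queue := rest } : GSState n).Invariant rA rI := by
  rcases h with ⟨hnd, hnq, hinj, hbest, hrej⟩
  rw [hq] at hnd hnq
  exact ⟨hnd.of_cons, fun hc hm => hnq hc (List.mem_cons_of_mem a hm), hinj, hbest, hrej⟩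

lemma accept (h : s.Invariant rA rI) (hq : s.queue = a :: rest)
    (hb : bestIn (rA a) (univ \ s.rejected a) = some o) (hh : s.holder o = none) :
    ({ s with queue := rest, holder := update s.holder o (some a) } : GSState n).Invariant rA rI := by
  rcases h with ⟨hnd, hnq, hinj, hbest, hrej⟩
  rw [hq] at hnd hnq
  constructor <;> simp only [update_apply] <;> grind

lemma displace (h : s.Invariant rA rI) (hq : s.queue = a :: rest)
    (hb : bestIn (rA a) (univ \ s.rejected a) = some o) (hh : s.holder o = some b)
    (hlt : rI o a < rI o b) :
    ({ queue := rest ++ [b], rejected := update s.rejected b (insert o (s.rejected b)),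
       holder := update s.holder o (some a) } : GSState n).Invariant rA rI := by
  rcases h with ⟨hnd, hnq, hinj, hbest, hrej⟩
  rw [hq] at hnd hnq
  constructor <;> simp only [update_apply] <;> grind

lemma reject (hI : Injective (rI o)) (h : s.Invariant rA rI) (hq : s.queue = a :: rest)
    (hh : s.holder o = some b) (hle : ¬rI o a < rI o b) :
    ({ s with queue := rest ++ [a],
              rejected := update s.rejected a (insert o (s.rejected a)) } : GSState n).Invariant
      rA rI := by
  rcases h with ⟨hnd, hnq, hinj, hbest, hrej⟩
  rw [hq] at hnd hnq
  have hba : b ≠ a := fun e => hnq (e ▸ hh) List.mem_cons_self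
  have hb_better : rI o b < rI o a := lt_of_le_of_ne (not_lt.mp hle) (hI.ne hba)
  constructor <;> simp only [update_apply] <;> grind

theorem step (hI : ∀ o, Injective (rI o)) (h : s.Invariant rA rI) :
    (gsStep rA rI s).Invariant rA rI := by
  unfold gsStep
  split
  next => exact h
  next a rest hq =>
    split
    next => exact h.skip hq
    next o hb =>
      split
      next hh => exact h.accept hq hb hh
      next b hh =>
        split_ifs with hlt
        · exact h.displace hq hb hh hlt
        · exact h.reject (hI o) hq hh hlt

theorem _root_.gsRun_invariant (hI : ∀ o, Injective (rI o)) : (gsRun rA rI).Invariant rA rI := by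
  unfold _root_.gsRun
  generalize n * n + n = k
  induction k with
  | zero => exact ⟨List.nodup_finRange n, by simp, by simp, by simp, by simp⟩
  | succ k ih => exact iterate_succ_apply' .. ▸ ih.step hI

lemma mem_rejected_of_rA_lt (h : s.Invariant rA rI) {oa : Fin n} (ha : s.holder oa = some a)
    (hlt : rA a o < rA a oa) : o ∈ s.rejected a := by
  by_contra hrej
  exact hlt.not_ge ((bestIn_eq_some (h.holder_best ha)).2 o (by simp [hrej]))

lemma rI_lt_of_rA_lt (h : s.Invariant rA rI) {oa : Fin n} (ha : s.holder oa = some a)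
    (hb : s.holder o = some b) (hlt : rA a o < rA a oa) : rI o b < rI o a := by
  obtain ⟨c, hc, hca⟩ := h.rejected_better (h.mem_rejected_of_rA_lt ha hlt)
  rw [hb, Option.some_inj] at hc
  exact hc ▸ hca

end GSState.Invariant

theorem galeShapley_stable_general {n : ℕ}
    (rA rI : Fin n → Fin n → ℕ)
    (hI : ∀ o, Function.Injective (rI o)) :
    ∀ a b o oa : Fin n,
      (gsRun rA rI).holder oa = some a → (gsRun rA rI).holder o = some b →
        o ≠ oa → ¬(rA a o < rA a oa ∧ rI o a < rI o b) := by
  rintro a b o oa ha hb - ⟨hpref_a, hpref_o⟩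
  exact hpref_o.not_gt ((gsRun_invariant hI).rI_lt_of_rA_lt ha hb hpref_a)

/-- The agent-proposing Gale-Shapley output is stable: there is no blocking pair,
i.e. no agent `a` matched to item `oa` and item `o ≠ oa` held by agent `b` such that
`a` strictly prefers `o` to `oa` and `o` strictly prefers `a` to `b`. -/
theorem galeShapley_stable {n : ℕ}
    (rA rI : Fin n → Fin n → ℕ)
    (hA : ∀ a, Function.Injective (rA a)) (hI : ∀ o, Function.Injective (rI o)) :
    ∀ a b o oa : Fin n,
      (gsRun rA rI).holder oa = some a → (gsRun rA rI).holder o = some b →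
        o ≠ oa → ¬(rA a o < rA a oa ∧ rI o a < rI o b) :=
  galeShapley_stable_general rA rI hI
end
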